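/- arXiv:2110.01400 — 2 statements merged into one kernel-verified Lean document; each statement's English description precedes it below -/
import Mathlib

section
/- If f : I → (0,∞) is GA-convex on I ⊆ (0,∞) (i.e., f(u^{1-λ}v^{λ}) ≤ (1-λ)f(u) + λf(v)) and u, v ∈ I with u < v, then f(√(uv)) ≤ (1/(ln v − ln u)) ∫_u^v f(x)/x dx ≤ (f(u)+f(v))/2. -/
open Real Set MeasureTheory intervalIntegral

/-! The substitution `x = exp t` turns a GA-convex `f` into the convex function `f ∘ exp` on
`[log u, log v]` and `∫ x in u..v, f x / x` into `∫ t in log u..log v, f (exp t)`, so both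
inequalities are the classical Hermite–Hadamard inequalities for `f ∘ exp`. These follow by
integrating `2 g ((a + b) / 2) ≤ g t + g (a + b - t) ≤ g a + g b` and noting that the reflection
`t ↦ a + b - t` preserves the integral. -/

section HermiteHadamard

variable {g : ℝ → ℝ} {a b : ℝ}

lemma add_sub_mem_Icc {t : ℝ} (ht : t ∈ Icc a b) : a + b - t ∈ Icc a b :=
  ⟨by linarith [ht.2], by linarith [ht.1]⟩

lemma ConvexOn.two_mul_map_midpoint_le (hg : ConvexOn ℝ (Icc a b) g) {t : ℝ}
    (ht : t ∈ Icc a b) : 2 * g ((a + b) / 2) ≤ g t + g (a + b - t) := by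
  have h := hg.2 ht (add_sub_mem_Icc ht) (by norm_num : (0 : ℝ) ≤ 1 / 2)
    (by norm_num : (0 : ℝ) ≤ 1 / 2) (by norm_num)
  simp only [smul_eq_mul, show 1 / 2 * t + 1 / 2 * (a + b - t) = (a + b) / 2 by ring] at h
  linarith

lemma ConvexOn.map_add_map_add_sub_le (hg : ConvexOn ℝ (Icc a b) g) {t : ℝ}
    (ht : t ∈ Icc a b) : g t + g (a + b - t) ≤ g a + g b := by
  rcases (ht.1.trans ht.2).eq_or_lt with rfl | hab
  · obtain rfl : t = a := le_antisymm ht.2 ht.1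
    simp
  set s := (t - a) / (b - a)
  have hs : s ∈ Icc (0 : ℝ) 1 :=
    ⟨div_nonneg (by linarith [ht.1]) (by linarith),
      (div_le_one (by linarith)).2 (by linarith [ht.2])⟩
  have ha : a ∈ Icc a b := left_mem_Icc.2 hab.le
  have hb : b ∈ Icc a b := right_mem_Icc.2 hab.le
  have h₁ := hg.2 ha hb (sub_nonneg.2 hs.2) hs.1 (sub_add_cancel 1 s)
  have h₂ := hg.2 ha hb hs.1 (sub_nonneg.2 hs.2) (add_sub_cancel s 1)
  have hts : (1 - s) * a + s * b = t := by
    simp only [s]; field_simp; ring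
  simp only [smul_eq_mul, hts, show s * a + (1 - s) * b = a + b - t by linarith] at h₁ h₂
  linarith

lemma IntervalIntegrable.comp_add_sub (hint : IntervalIntegrable g volume a b) :
    IntervalIntegrable (fun t ↦ g (a + b - t)) volume a b := by
  simpa using (hint.comp_sub_left (a + b)).symm

lemma integral_add_comp_add_sub (hint : IntervalIntegrable g volume a b) :
    ∫ t in a..b, (g t + g (a + b - t)) = 2 * ∫ t in a..b, g t := by
  have hrefl : ∫ t in a..b, g (a + b - t) = ∫ t in a..b, g t := by
    simp [integral_comp_sub_left]
  rw [integral_add hint hint.comp_add_sub, hrefl, two_mul]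

lemma ConvexOn.mul_map_midpoint_le_integral (hab : a ≤ b) (hg : ConvexOn ℝ (Icc a b) g)
    (hint : IntervalIntegrable g volume a b) :
    (b - a) * g ((a + b) / 2) ≤ ∫ t in a..b, g t := by
  have h := integral_mono_on hab intervalIntegrable_const (hint.add hint.comp_add_sub)
    fun t ht ↦ hg.two_mul_map_midpoint_le ht
  rw [integral_add_comp_add_sub hint, intervalIntegral.integral_const, smul_eq_mul] at h
  linarith

lemma ConvexOn.integral_le_mul_add (hab : a ≤ b) (hg : ConvexOn ℝ (Icc a b) g)
    (hint : IntervalIntegrable g volume a b) :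
    ∫ t in a..b, g t ≤ (b - a) * ((g a + g b) / 2) := by
  have h := integral_mono_on hab (hint.add hint.comp_add_sub)
    intervalIntegrable_const fun t ht ↦ hg.map_add_map_add_sub_le ht
  rw [integral_add_comp_add_sub hint, intervalIntegral.integral_const, smul_eq_mul] at h
  linarith

end HermiteHadamard

lemma convexOn_comp_exp_of_ga_convex {s : Set ℝ} (hs : OrdConnected s) {f : ℝ → ℝ}
    (hf : ∀ a ∈ s, ∀ b ∈ s, ∀ l ∈ Icc (0 : ℝ) 1,
      f (a ^ (1 - l) * b ^ l) ≤ (1 - l) * f a + l * f b) :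
    ConvexOn ℝ (exp ⁻¹' s) (fun t ↦ f (exp t)) := by
  refine ⟨(hs.preimage_mono exp_monotone).convex, fun x hx y hy μ l hμ hl hμl ↦ ?_⟩
  obtain rfl : μ = 1 - l := by linarith
  have h := hf _ hx _ hy l ⟨hl, by linarith⟩
  rwa [← exp_mul, ← exp_mul, ← exp_add, mul_comm x, mul_comm y] at h

lemma integral_div_id_eq_integral_comp_exp (f : ℝ → ℝ) {u v : ℝ} (hu : 0 < u) (hv : 0 < v) :
    ∫ x in u..v, f x / x = ∫ t in log u..log v, f (exp t) := by
  have h := integral_comp_mul_deriv_of_deriv_nonneg (g := fun x ↦ f x / x)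
    (a := log u) (b := log v) continuous_exp.continuousOn (fun t _ ↦ hasDerivAt_exp t)
    (fun t _ ↦ (exp_pos t).le)
  simp only [Function.comp_apply, div_mul_cancel₀ _ (exp_pos _).ne', exp_log hu,
    exp_log hv] at h
  exact h.symm

lemma intervalIntegrable_comp_exp {f : ℝ → ℝ} {u v : ℝ} (hu : 0 < u) (hv : 0 < v)
    (hint : IntervalIntegrable f volume u v) :
    IntervalIntegrable (fun t ↦ f (exp t)) volume (log u) (log v) := by
  have hdiv : IntervalIntegrable (fun x ↦ f x / x) volume u v :=
    hint.mul_continuousOn (continuousOn_inv₀.mono fun x hx ↦ ((lt_min hu hv).trans_le hx.1).ne')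
  have h := (integrable_comp_mul_deriv_iff_of_deriv_nonneg (g := fun x ↦ f x / x)
    (a := log u) (b := log v) continuous_exp.continuousOn (fun t _ ↦ hasDerivAt_exp t)
    (fun t _ ↦ (exp_pos t).le)).2 (by rwa [exp_log hu, exp_log hv])
  simpa only [Function.comp_apply, div_mul_cancel₀ _ (exp_pos _).ne'] using h

theorem hermite_hadamard_GA_convex_general (I : Set ℝ) (hI : I ⊆ Set.Ioi (0:ℝ))
    (hIcc : Set.OrdConnected I) (f : ℝ → ℝ)
    (hf : ∀ a ∈ I, ∀ b ∈ I, ∀ l ∈ Set.Icc (0:ℝ) 1,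
      f (a ^ (1 - l) * b ^ l) ≤ (1 - l) * f a + l * f b)
    (u v : ℝ) (hu : u ∈ I) (hv : v ∈ I) (huv : u < v)
    (hint : IntervalIntegrable f MeasureTheory.volume u v) :
    f (Real.sqrt (u * v)) ≤ (1 / (Real.log v - Real.log u)) * ∫ x in u..v, f x / x ∧
      (1 / (Real.log v - Real.log u)) * ∫ x in u..v, f x / x ≤ (f u + f v) / 2 := by
  have hu0 : 0 < u := hI hu
  have hv0 : 0 < v := hI hv
  have hlog : 0 < log v - log u := sub_pos.2 (log_lt_log hu0 huv)
  have hconv : ConvexOn ℝ (Icc (log u) (log v)) (fun t ↦ f (exp t)) := by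
    refine (convexOn_comp_exp_of_ga_convex hIcc hf).subset (fun t ht ↦ hIcc.out hu hv ?_)
      (convex_Icc _ _)
    rw [← exp_log hu0, ← exp_log hv0]
    exact ⟨exp_le_exp.2 ht.1, exp_le_exp.2 ht.2⟩
  have hint' := intervalIntegrable_comp_exp hu0 hv0 hint
  have hsqrt : √(u * v) = exp ((log u + log v) / 2) := by
    rw [exp_half, exp_add, exp_log hu0, exp_log hv0]
  rw [integral_div_id_eq_integral_comp_exp f hu0 hv0, hsqrt, one_div_mul_eq_div]
  constructor
  · rw [le_div_iff₀ hlog, mul_comm]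
    exact hconv.mul_map_midpoint_le_integral (log_le_log hu0 huv.le) hint'
  · rw [div_le_iff₀ hlog, mul_comm]
    simpa only [exp_log hu0, exp_log hv0] using
      hconv.integral_le_mul_add (log_le_log hu0 huv.le) hint'

theorem hermite_hadamard_GA_convex (I : Set ℝ) (hI : I ⊆ Set.Ioi (0:ℝ))
    (hIcc : Set.OrdConnected I) (f : ℝ → ℝ) (hfpos : ∀ x ∈ I, 0 < f x)
    (hf : ∀ a ∈ I, ∀ b ∈ I, ∀ l ∈ Set.Icc (0:ℝ) 1,
      f (a ^ (1 - l) * b ^ l) ≤ (1 - l) * f a + l * f b)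
    (u v : ℝ) (hu : u ∈ I) (hv : v ∈ I) (huv : u < v)
    (hint : IntervalIntegrable f MeasureTheory.volume u v) :
    f (Real.sqrt (u * v)) ≤ (1 / (Real.log v - Real.log u)) * ∫ x in u..v, f x / x ∧
      (1 / (Real.log v - Real.log u)) * ∫ x in u..v, f x / x ≤ (f u + f v) / 2 :=
  hermite_hadamard_GA_convex_general I hI hIcc f hf u v hu hv huv hint
end

section
/- If f : [u,v] → (0,∞) is log-convex and continuous, with u < v, then f((u+v)/2) ≤ (1/(v-u)) ∫_u^v √(f(x) f(u+v−x)) dx ≤ √(f(u) f(v)). -/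
theorem hermite_hadamard_log_convex (u v : ℝ) (huv : u < v) (f : ℝ → ℝ)
    (hfpos : ∀ x ∈ Set.Icc u v, 0 < f x)
    (hcont : ContinuousOn f (Set.Icc u v))
    (hf : ∀ a ∈ Set.Icc u v, ∀ b ∈ Set.Icc u v, ∀ l ∈ Set.Icc (0:ℝ) 1,
      f ((1 - l) * a + l * b) ≤ f a ^ (1 - l) * f b ^ l) :
    f ((u + v) / 2) ≤ (1 / (v - u)) * ∫ x in u..v, Real.sqrt (f x * f (u + v - x)) ∧
      (1 / (v - u)) * (∫ x in u..v, Real.sqrt (f x * f (u + v - x))) ≤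
        Real.sqrt (f u * f v) := by
  have hvu : (0:ℝ) < v - u := by linarith
  have hmem : ∀ x ∈ Set.Icc u v, u + v - x ∈ Set.Icc u v := by
    intro x hx
    exact ⟨by linarith [hx.2], by linarith [hx.1]⟩
  -- pointwise lower bound
  have hlow : ∀ x ∈ Set.Icc u v, f ((u + v) / 2) ≤ Real.sqrt (f x * f (u + v - x)) := by
    intro x hx
    have h := hf x hx (u + v - x) (hmem x hx) (1/2) ⟨by norm_num, by norm_num⟩
    have harg : (1 - 1/2) * x + (1/2) * (u + v - x) = (u + v) / 2 := by ring
    rw [harg] at h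
    have h12 : (1 - 1/2 : ℝ) = 1/2 := by norm_num
    rw [h12] at h
    calc f ((u + v) / 2) ≤ f x ^ (1/2:ℝ) * f (u + v - x) ^ (1/2:ℝ) := h
      _ = (f x * f (u + v - x)) ^ (1/2:ℝ) :=
        (Real.mul_rpow (hfpos x hx).le (hfpos _ (hmem x hx)).le).symm
      _ = Real.sqrt (f x * f (u + v - x)) := (Real.sqrt_eq_rpow _).symm
  -- general upper bound lemma
  have hup0 : ∀ y ∈ Set.Icc u v,
      f y ≤ f u ^ (1 - (y - u)/(v - u)) * f v ^ ((y - u)/(v - u)) := by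
    intro y hy
    have hl : (y - u)/(v - u) ∈ Set.Icc (0:ℝ) 1 :=
      ⟨div_nonneg (by linarith [hy.1]) hvu.le, (div_le_one hvu).mpr (by linarith [hy.2])⟩
    have h := hf u (Set.left_mem_Icc.mpr huv.le) v (Set.right_mem_Icc.mpr huv.le) _ hl
    have harg : (1 - (y - u)/(v - u)) * u + ((y - u)/(v - u)) * v = y := by
      field_simp
      ring
    rwa [harg] at h
  have hupp : ∀ x ∈ Set.Icc u v,
      Real.sqrt (f x * f (u + v - x)) ≤ Real.sqrt (f u * f v) := by
    intro x hx
    apply Real.sqrt_le_sqrt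
    have h1 := hup0 x hx
    have h2 := hup0 (u + v - x) (hmem x hx)
    set l := (x - u)/(v - u) with hldef
    have hl2 : (u + v - x - u)/(v - u) = 1 - l := by
      rw [hldef]; field_simp; ring
    rw [hl2] at h2
    have hu0 := hfpos u (Set.left_mem_Icc.mpr huv.le)
    have hv0 := hfpos v (Set.right_mem_Icc.mpr huv.le)
    have hfx0 := (hfpos x hx).le
    have h2' : f u ^ (1 - (1-l)) = f u ^ l := by norm_num
    calc f x * f (u + v - x)
        ≤ (f u ^ (1 - l) * f v ^ l) * (f u ^ (1 - (1-l)) * f v ^ (1-l)) := by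
          apply mul_le_mul h1 h2 (hfpos _ (hmem x hx)).le
          positivity
      _ = (f u ^ (1 - l) * f u ^ (1 - (1-l))) * (f v ^ l * f v ^ (1-l)) := by ring
      _ = f u * f v := by
          rw [← Real.rpow_add hu0, ← Real.rpow_add hv0]
          norm_num
  -- continuity / integrability
  have hcg : ContinuousOn (fun x => Real.sqrt (f x * f (u + v - x))) (Set.Icc u v) := by
    apply Real.continuous_sqrt.comp_continuousOn
    apply hcont.mul
    exact hcont.comp (by fun_prop) hmem
  have hig : IntervalIntegrable (fun x => Real.sqrt (f x * f (u + v - x)))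
      MeasureTheory.volume u v := by
    apply ContinuousOn.intervalIntegrable
    rwa [Set.uIcc_of_le huv.le]
  constructor
  · have := intervalIntegral.integral_mono_on huv.le intervalIntegrable_const hig hlow
    rw [intervalIntegral.integral_const, smul_eq_mul] at this
    rw [one_div, le_inv_mul_iff₀ hvu]
    linarith [this]
  · have := intervalIntegral.integral_mono_on huv.le hig intervalIntegrable_const hupp
    rw [intervalIntegral.integral_const, smul_eq_mul] at this
    rw [one_div, inv_mul_le_iff₀ hvu]
    linarith [this]
end
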